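/- For every natural number n, the element θ1ⁿ θ2⁻ⁿ commutes with k in G. -/
import Mathlib


/-- The four generators θ₁, θ₂, a, k of the free group `F` on four letters. -/
def theta1 : FreeGroup (Fin 4) := FreeGroup.of 0
def theta2 : FreeGroup (Fin 4) := FreeGroup.of 1
def aF : FreeGroup (Fin 4) := FreeGroup.of 2
def kF : FreeGroup (Fin 4) := FreeGroup.of 3

/-- The four defining relators θᵢ⁻¹aθᵢa⁻¹ and θᵢ⁻¹kθᵢa⁻¹k⁻¹, i = 1,2. -/
def rels : Set (FreeGroup (Fin 4)) :=
  {theta1⁻¹ * aF * theta1 * aF⁻¹, theta2⁻¹ * aF * theta2 * aF⁻¹,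
   theta1⁻¹ * kF * theta1 * aF⁻¹ * kF⁻¹, theta2⁻¹ * kF * theta2 * aF⁻¹ * kF⁻¹}

/-- The group `G = ⟨θ₁, θ₂, a, k ∣ aᶿⁱ = a, kᶿⁱ = ka⟩`. -/
abbrev G : Type := PresentedGroup rels

/-- The quotient map `F → G`. -/
def π : FreeGroup (Fin 4) →* G := PresentedGroup.mk rels

lemma pi_rel_one {r : FreeGroup (Fin 4)} (hr : r ∈ rels) : π r = 1 := by
  have : r ∈ Subgroup.normalClosure rels := Subgroup.subset_normalClosure hr
  exact (QuotientGroup.eq_one_iff r).mpr this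

lemma key (t K A : G) (hA : Commute A t) (hK : t⁻¹ * K * t = K * A) (n : ℕ) :
    K * t ^ n = t ^ n * (K * A ^ n) := by
  induction n with
  | zero => simp
  | succ m ih =>
    have hKt : K * t = t * (K * A) := by
      rw [← hK]; group
    have hAt : A ^ m * t = t * A ^ m := (hA.pow_left m).eq
    calc K * t ^ (m + 1) = (K * t ^ m) * t := by rw [pow_succ]; group
      _ = t ^ m * (K * (A ^ m * t)) := by rw [ih]; group
      _ = t ^ m * ((K * t) * A ^ m) := by rw [hAt]; group
      _ = t ^ m * (t * (K * A) * A ^ m) := by rw [hKt]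
      _ = t ^ (m + 1) * (K * A ^ (m + 1)) := by rw [pow_succ, pow_succ]; group

/-- For every `n`, the element `θ₁ⁿ θ₂⁻ⁿ` commutes with `k` in `G`. -/
theorem theta_pow_commutes_k (n : ℕ) :
    Commute (π theta1 ^ n * (π theta2 ^ n)⁻¹) (π kF) := by
  set t1 := π theta1
  set t2 := π theta2
  set A := π aF
  set K := π kF
  have r1 : t1⁻¹ * A * t1 * A⁻¹ = 1 := by
    have := pi_rel_one (show theta1⁻¹ * aF * theta1 * aF⁻¹ ∈ rels by simp [rels])
    simpa [t1, A] using this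
  have r2 : t2⁻¹ * A * t2 * A⁻¹ = 1 := by
    have := pi_rel_one (show theta2⁻¹ * aF * theta2 * aF⁻¹ ∈ rels by simp [rels])
    simpa [t2, A] using this
  have r3 : t1⁻¹ * K * t1 * A⁻¹ * K⁻¹ = 1 := by
    have := pi_rel_one (show theta1⁻¹ * kF * theta1 * aF⁻¹ * kF⁻¹ ∈ rels by simp [rels])
    simpa [t1, A, K] using this
  have r4 : t2⁻¹ * K * t2 * A⁻¹ * K⁻¹ = 1 := by
    have := pi_rel_one (show theta2⁻¹ * kF * theta2 * aF⁻¹ * kF⁻¹ ∈ rels by simp [rels])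
    simpa [t2, A, K] using this
  have hA1 : Commute A t1 := by
    have : A * t1 = t1 * A := by
      have := mul_eq_one_iff_eq_inv.mp r1
      -- t1⁻¹ * A * t1 = A
      group at this ⊢
      calc A * t1 = t1 * (t1⁻¹ * A * t1) := by group
        _ = t1 * A := by rw [show t1⁻¹ * A * t1 = A from by
              have h := r1
              have : t1⁻¹ * A * t1 = A := by
                have := congrArg (· * A) h; simpa [mul_assoc] using this
              exact this]
    exact this
  have hA2 : Commute A t2 := by
    have : t2⁻¹ * A * t2 = A := by
      have := congrArg (· * A) r2; simpa [mul_assoc] using this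
    calc A * t2 = t2 * (t2⁻¹ * A * t2) := by group
      _ = t2 * A := by rw [this]
  have hK1 : t1⁻¹ * K * t1 = K * A := by
    have := congrArg (· * (K * A)) r3
    simpa [mul_assoc] using this
  have hK2 : t2⁻¹ * K * t2 = K * A := by
    have := congrArg (· * (K * A)) r4
    simpa [mul_assoc] using this
  have k1 := key t1 K A hA1 hK1 n
  have k2 := key t2 K A hA2 hK2 n
  -- goal: t1^n * (t2^n)⁻¹ * K = K * (t1^n * (t2^n)⁻¹)
  show t1 ^ n * (t2 ^ n)⁻¹ * K = K * (t1 ^ n * (t2 ^ n)⁻¹)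
  have h2' : (t2 ^ n)⁻¹ * K = K * A ^ n * (t2 ^ n)⁻¹ := by
    have : K = t2 ^ n * (K * A ^ n) * (t2 ^ n)⁻¹ := by rw [← k2]; group
    calc (t2 ^ n)⁻¹ * K = (t2 ^ n)⁻¹ * (t2 ^ n * (K * A ^ n) * (t2 ^ n)⁻¹) := by rw [← this]
      _ = K * A ^ n * (t2 ^ n)⁻¹ := by group
  calc t1 ^ n * (t2 ^ n)⁻¹ * K = t1 ^ n * (K * A ^ n) * (t2 ^ n)⁻¹ := by
        rw [mul_assoc, h2']; simp [mul_assoc]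
    _ = K * t1 ^ n * (t2 ^ n)⁻¹ := by rw [← k1]
    _ = K * (t1 ^ n * (t2 ^ n)⁻¹) := by group
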